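/- Suppose the additional jump points s₁,…,s_m are added into the open intervals I_{α₁},…,I_{α_m} respectively, i.e. sᵢ ∈ I_{αᵢ} for i = 1,…,m. Let σ : ℝ → ℝ be a bijection such that both 𝒜 and 𝒜_S are invariant under σ and σ⁻¹. Then σ(⋃_{i=1}^m I_{αᵢ}) = ⋃_{i=1}^m I_{αᵢ}. -/

import Mathlib

open scoped Classical

noncomputable section

namespace PaperTRS

/-- The algebra of complex valued functions constant on each set of the family `P`. -/
def partAlg {X J : Type*} (P : J → Set X) : Subalgebra ℂ (X → ℂ) where
  carrier := {h | ∀ i, ∀ x ∈ P i, ∀ y ∈ P i, h x = h y}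
  mul_mem' := by
    intro a b ha hb i x hx y hy
    simp only [Pi.mul_apply, ha i x hx y hy, hb i x hx y hy]
  add_mem' := by
    intro a b ha hb i x hx y hy
    simp only [Pi.add_apply, ha i x hx y hy, hb i x hx y hy]
  algebraMap_mem' := by intro r i x hx y hy; rfl

/-- Piecewise constant functions on `ℝ` whose jumps all lie in the set `T`. -/
def pcAlgOn (T : Set ℝ) : Subalgebra ℂ (ℝ → ℂ) where
  carrier := {h | ∀ x y : ℝ, x ∉ T → y ∉ T →
    (∀ u ∈ T, u ∉ Set.Icc (min x y) (max x y)) → h x = h y}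
  mul_mem' := by
    intro a b ha hb x y hx hy hxy
    simp only [Pi.mul_apply, ha x y hx hy hxy, hb x y hx hy hxy]
  add_mem' := by
    intro a b ha hb x y hx hy hxy
    simp only [Pi.add_apply, ha x y hx hy hxy, hb x y hx hy hxy]
  algebraMap_mem' := by intro r x y _ _ _; rfl

/-- Invariance of an algebra of functions under a self-map of `X`. -/
def AlgInvariant {X : Type*} (A : Subalgebra ℂ (X → ℂ)) (σ : X → X) : Prop :=
  ∀ h ∈ A, (h ∘ σ) ∈ A

/-- `Sep A σ n = {x | ∃ h ∈ A, h x ≠ σ̃ⁿ(h) x}`, where `σ̃ⁿ(h) = h ∘ σ⁻ⁿ`. -/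
def Sep {X : Type*} (A : Subalgebra ℂ (X → ℂ)) (σ : Equiv.Perm X) (n : ℤ) : Set X :=
  {x | ∃ h ∈ A, h x ≠ h ((σ ^ n)⁻¹ x)}

/-- Twisted convolution product on the crossed product `⋊ ℤ`:
`(fₙ δⁿ) * (gₘ δᵐ) = fₙ · σ̃ⁿ(gₘ) · δ^{n+m}` extended bilinearly. -/
def cmul {X : Type*} (σ : Equiv.Perm X) (f g : ℤ →₀ (X → ℂ)) : ℤ →₀ (X → ℂ) :=
  f.sum fun n a => g.sum fun m b =>
    Finsupp.single (n + m) (fun x => a x * b ((σ ^ n)⁻¹ x))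

/-- Membership of an element `Σ fₙ δⁿ` in the crossed product of the algebra `B` with `ℤ`. -/
def InCrossed {X : Type*} (B : Subalgebra ℂ (X → ℂ)) (f : ℤ →₀ (X → ℂ)) : Prop :=
  ∀ n, f n ∈ B

/-- The commutant of `A` inside the crossed product `B ⋊ ℤ` (where `A ⊆ B`). -/
def commutant {X : Type*} (A B : Subalgebra ℂ (X → ℂ)) (σ : Equiv.Perm X) :
    Set (ℤ →₀ (X → ℂ)) :=
  {f | InCrossed B f ∧
    ∀ a ∈ A, cmul σ f (Finsupp.single 0 a) = cmul σ (Finsupp.single 0 a) f}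

/-- The jump points `t₁ < ⋯ < t_N` extended by `t₀ = -∞` and `t_{N+1} = +∞`. -/
def tE (N : ℕ) (t : Fin N → ℝ) (i : ℕ) : EReal :=
  if h : 1 ≤ i ∧ i ≤ N then ((t ⟨i - 1, by omega⟩ : ℝ) : EReal)
  else if i = 0 then ⊥ else ⊤

/-- The open interval `I_i = (t_i, t_{i+1})` for `0 ≤ i ≤ N`. -/
def openPiece (N : ℕ) (t : Fin N → ℝ) (i : ℕ) : Set ℝ :=
  {x : ℝ | tE N t i < (x : EReal) ∧ (x : EReal) < tE N t (i + 1)}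

/-- The sets of the partition of `ℝ` determined by the jump points: the open
intervals `I_0, …, I_N` together with the singletons `{t_i}`. -/
def pieces (N : ℕ) (t : Fin N → ℝ) : Set (Set ℝ) :=
  {P | (∃ i : ℕ, i ≤ N ∧ P = openPiece N t i) ∨ (∃ i : Fin N, P = {t i})}

/-- `C_k`: points `x` such that `k` is the smallest positive integer with `x` and
`σᵏ(x)` in one common set of the partition. -/
def Ck (N : ℕ) (t : Fin N → ℝ) (σ : Equiv.Perm ℝ) (k : ℕ) : Set ℝ :=
  {x | IsLeast {j : ℕ | 0 < j ∧ ∃ P ∈ pieces N t, x ∈ P ∧ (σ ^ j) x ∈ P} k}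

end PaperTRS
namespace PaperTRS

/-- With `p` points `s i 0 < ⋯ < s i (p-1)` added in the interval `I_{α i}`, the `j`-th
open subinterval of the refined partition of `I_{α i}`, for `j = 0, …, p`. -/
def subPiece (N : ℕ) (t : Fin N → ℝ) {k p : ℕ} (α : Fin k → ℕ)
    (s : Fin k → Fin p → ℝ) (i : Fin k) (j : Fin (p + 1)) : Set ℝ :=
  {x : ℝ |
    (if hj : (j : ℕ) = 0 then tE N t (α i)
      else ((s i ⟨(j : ℕ) - 1, by have := j.isLt; omega⟩ : ℝ) : EReal)) < (x : EReal) ∧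
    (x : EReal) <
      (if hj : (j : ℕ) = p then tE N t (α i + 1)
        else ((s i ⟨(j : ℕ), by have := j.isLt; omega⟩ : ℝ) : EReal))}

/-- The sets of the refined partition of the union of the intervals `I_{α i}`: the open
subintervals determined by the added jump points together with the singleton jump points. -/
def cyclePieces (N : ℕ) (t : Fin N → ℝ) {k p : ℕ} (α : Fin k → ℕ)
    (s : Fin k → Fin p → ℝ) : Set (Set ℝ) :=
  {P | (∃ i j, P = subPiece N t α s i j) ∨ (∃ i j, P = ({s i j} : Set ℝ))}

/-- `C̃_r`: points `x` of `⋃ᵢ I_{α i}` such that `r` is the smallest positive integer with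
`x` and `σʳ(x)` in one common set of the refined partition. -/
def Ctil (N : ℕ) (t : Fin N → ℝ) (σ : Equiv.Perm ℝ) {k p : ℕ} (α : Fin k → ℕ)
    (s : Fin k → Fin p → ℝ) (r : ℕ) : Set ℝ :=
  {x | x ∈ ⋃ i, openPiece N t (α i) ∧
    IsLeast {j : ℕ | 0 < j ∧ ∃ P ∈ cyclePieces N t α s, x ∈ P ∧ (σ ^ j) x ∈ P} r}

/-- The cyclic setup: `k` pairwise distinct open intervals `I_{α 0}, …, I_{α (k-1)}` of the
original partition, contained in `C_k` and permuted cyclically by `σ`, with `p` jump points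
`s i 0 < ⋯ < s i (p-1)` added into each of them, and both the original algebra `𝒜` and the
refined algebra `𝒜_S` invariant under `σ` and `σ⁻¹`. -/
def CyclicSetup (N : ℕ) (t : Fin N → ℝ) (σ : Equiv.Perm ℝ) {k p : ℕ} (α : Fin k → ℕ)
    (s : Fin k → Fin p → ℝ) : Prop :=
  0 < k ∧ (∀ i, α i ≤ N) ∧ Function.Injective α ∧
  (∀ i j, s i j ∈ openPiece N t (α i)) ∧ (∀ i, StrictMono (s i)) ∧
  (∀ i : Fin k, ∃ i' : Fin k, ((i' : ℕ) = ((i : ℕ) + 1) % k) ∧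
    σ '' openPiece N t (α i) = openPiece N t (α i')) ∧
  (∀ i, openPiece N t (α i) ⊆ Ck N t σ k) ∧
  AlgInvariant (pcAlgOn (Set.range t)) σ ∧
  AlgInvariant (pcAlgOn (Set.range t)) σ.symm ∧
  AlgInvariant (pcAlgOn (Set.range t ∪ ⋃ i, Set.range (s i))) σ ∧
  AlgInvariant (pcAlgOn (Set.range t ∪ ⋃ i, Set.range (s i))) σ.symm

/-- `C_k` for the partition `P` of a general set `X`. -/
def CkGen {X ι : Type*} (P : ι → Set X) (σ : Equiv.Perm X) (k : ℕ) : Set X :=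
  {x | IsLeast {j : ℕ | 0 < j ∧ ∃ i, x ∈ P i ∧ (σ ^ j) x ∈ P i} k}

/-- `C̃_r` relative to a family `Q` of refined pieces inside the subset `base` of `X`. -/
def CtilGen {X ι : Type*} (σ : Equiv.Perm X) (Q : ι → Set X) (base : Set X) (r : ℕ) :
    Set X :=
  {x | x ∈ base ∧ IsLeast {j : ℕ | 0 < j ∧ ∃ i, x ∈ Q i ∧ (σ ^ j) x ∈ Q i} r}

/-- `C_∞`: points that never return to the partition set they lie in. -/
def Cinf {X ι : Type*} (P : ι → Set X) (σ : Equiv.Perm X) : Set X :=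
  {x | ∀ k : ℕ, 0 < k → ¬∃ i, x ∈ P i ∧ (σ ^ k) x ∈ P i}

end PaperTRS
namespace PaperTRS

/-!
For a finite set `W`, the jump set `W` can be read off `pcAlgOn W`: it consists of the points
`u` whose indicator `Pi.single u 1` lies in it, since a point off `W` has a neighbour that no
function of `pcAlgOn W` separates from it. Invariance of `pcAlgOn W` under `σ⁻¹` therefore forces
`σ(W) ⊆ W`. Applied to `𝒜` and `𝒜_S` this makes `σ` send each `sᵢ` to some `sⱼ`. Two points off
the `t`'s lie in the same interval `I_α` exactly when `𝒜` does not separate them, and `σ`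
respects this relation because `𝒜` is `σ`-invariant; so `σ` maps `I_{αᵢ}` into `I_{αⱼ}`.
-/

open Set
open scoped Interval

section Jumps

variable {W : Set ℝ}

lemma mem_pcAlgOn_iff {f : ℝ → ℂ} :
    f ∈ pcAlgOn W ↔ ∀ x y, x ∉ W → y ∉ W → (∀ u ∈ W, u ∉ [[x, y]]) → f x = f y :=
  Iff.rfl

lemma pi_single_mem_pcAlgOn {u : ℝ} (hu : u ∈ W) : Pi.single u (1 : ℂ) ∈ pcAlgOn W := by
  intro x y hx hy _
  simp [(ne_of_mem_of_not_mem hu hx).symm, (ne_of_mem_of_not_mem hu hy).symm]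

lemma indicator_Iio_mem_pcAlgOn {u : ℝ} (hu : u ∈ W) :
    (Iio u).indicator (1 : ℝ → ℂ) ∈ pcAlgOn W := by
  rw [mem_pcAlgOn_iff]
  intro x y _ _ hxy
  have hu' := hxy u hu
  rw [mem_uIcc] at hu'
  by_cases hx : x < u <;> by_cases hy : y < u <;> simp_all <;> linarith

lemma exists_ne_forall_notMem_uIcc (hW : W.Finite) {v : ℝ} (hv : v ∉ W) :
    ∃ y ≠ v, ∀ u ∈ W, u ∉ [[v, y]] := by
  obtain ⟨ε, hε, hball⟩ := Metric.isOpen_iff.mp hW.isClosed.isOpen_compl v hv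
  refine ⟨v + ε / 2, by linarith, fun u hu hvu => hball ?_ hu⟩
  rw [uIcc_of_le (by linarith)] at hvu
  rw [Metric.mem_ball, Real.dist_eq, abs_lt]
  constructor <;> linarith [hvu.1, hvu.2]

lemma forall_mem_pcAlgOn_eq_iff {x y : ℝ} (hx : x ∉ W) (hy : y ∉ W) :
    (∀ f ∈ pcAlgOn W, f x = f y) ↔ ∀ u ∈ W, u ∉ [[x, y]] := by
  refine ⟨fun h u hu hxy => ?_, fun h f hf => hf x y hx hy h⟩
  have hsep := h _ (indicator_Iio_mem_pcAlgOn hu)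
  have hxu := ne_of_mem_of_not_mem hu hx
  have hyu := ne_of_mem_of_not_mem hu hy
  rcases mem_uIcc.mp hxy with ⟨h1, h2⟩ | ⟨h1, h2⟩
  · simp [lt_of_le_of_ne h1 hxu.symm, not_lt.mpr h2] at hsep
  · simp [lt_of_le_of_ne h1 hyu.symm, not_lt.mpr h2] at hsep

lemma mapsTo_of_algInvariant_symm (hW : W.Finite) {σ : Equiv.Perm ℝ}
    (hσ : AlgInvariant (pcAlgOn W) σ.symm) : MapsTo σ W W := by
  intro u hu
  by_contra hσu
  obtain ⟨y, hyu, hy⟩ := exists_ne_forall_notMem_uIcc hW hσu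
  have hσy : σ.symm y ≠ u := fun h => hyu (by rw [← h, σ.apply_symm_apply])
  have hsep := hσ _ (pi_single_mem_pcAlgOn hu) (σ u) y hσu (fun h => hy y h right_mem_uIcc) hy
  simp [hσy] at hsep

end Jumps

section Intervals

variable {N : ℕ} {t : Fin N → ℝ} {i : ℕ} {x y : ℝ}

lemma tE_succ (j : Fin N) : tE N t (j + 1) = t j := by
  rw [tE, dif_pos ⟨by omega, j.isLt⟩]
  simp

lemma tE_monotone (ht : StrictMono t) : Monotone (tE N t) := by
  refine monotone_nat_of_le_succ fun i => ?_
  unfold tE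
  split_ifs <;> first
    | exact bot_le
    | exact le_top
    | contradiction
    | omega
    | exact EReal.coe_le_coe_iff.mpr (ht.monotone (Fin.mk_le_mk.mpr (by omega)))

lemma exists_mem_range_of_tE_mem_Icc {a b : ℝ} (h : tE N t i ∈ Icc (a : EReal) b) :
    ∃ u ∈ range t, u ∈ Icc a b := by
  unfold tE at h
  split_ifs at h
  · exact ⟨_, mem_range_self _, EReal.coe_le_coe_iff.mp h.1, EReal.coe_le_coe_iff.mp h.2⟩
  · exact absurd h.1 (by simp)
  · exact absurd h.2 (by simp)

lemma notMem_range_of_mem_openPiece (ht : StrictMono t) (hx : x ∈ openPiece N t i) :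
    x ∉ range t := by
  rintro ⟨j, rfl⟩
  obtain ⟨hlow, hupp⟩ := hx
  rw [← tE_succ j] at hlow hupp
  have := (tE_monotone ht).reflect_lt hlow
  have := (tE_monotone ht).reflect_lt hupp
  omega

lemma ordConnected_openPiece : (openPiece N t i).OrdConnected :=
  ordConnected_Ioo.preimage_mono EReal.coe_strictMono.monotone

lemma mem_openPiece_iff (ht : StrictMono t) (hy : y ∈ openPiece N t i) :
    x ∈ openPiece N t i ↔ ∀ u ∈ range t, u ∉ [[x, y]] := by
  refine ⟨fun hx u hu hxy =>
    notMem_range_of_mem_openPiece ht (ordConnected_openPiece.uIcc_subset hx hy hxy) hu,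
    fun h => ?_⟩
  by_contra hx
  simp only [openPiece, mem_ofPred_eq, not_and_or, not_lt] at hx
  rcases hx with hx | hx
  · obtain ⟨u, hu, hxu⟩ := exists_mem_range_of_tE_mem_Icc ⟨hx, hy.1.le⟩
    exact h u hu (Icc_subset_uIcc hxu)
  · obtain ⟨u, hu, hyu⟩ := exists_mem_range_of_tE_mem_Icc ⟨hy.2.le, hx⟩
    exact h u hu (Icc_subset_uIcc' hyu)

lemma mem_openPiece_iff_forall_eq (ht : StrictMono t) (hy : y ∈ openPiece N t i)
    (hx : x ∉ range t) :
    x ∈ openPiece N t i ↔ ∀ f ∈ pcAlgOn (range t), f x = f y := by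
  rw [mem_openPiece_iff ht hy,
    forall_mem_pcAlgOn_eq_iff hx (notMem_range_of_mem_openPiece ht hy)]

lemma mapsTo_iUnion_openPiece (ht : StrictMono t) {m : ℕ} {s : Fin m → ℝ}
    {α : Fin m → ℕ} (hmem : ∀ i, s i ∈ openPiece N t (α i)) {σ : Equiv.Perm ℝ}
    (h𝒜 : AlgInvariant (pcAlgOn (range t)) σ)
    (h𝒜S : AlgInvariant (pcAlgOn (range t ∪ range s)) σ.symm) :
    MapsTo σ (⋃ i, openPiece N t (α i)) (⋃ i, openPiece N t (α i)) := by
  have hT : MapsTo σ.symm (range t) (range t) :=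
    mapsTo_of_algInvariant_symm (finite_range t) h𝒜
  have hS : MapsTo σ (range t ∪ range s) (range t ∪ range s) :=
    mapsTo_of_algInvariant_symm ((finite_range t).union (finite_range s)) h𝒜S
  have hσ_notMem {x : ℝ} (hx : x ∉ range t) : σ x ∉ range t :=
    fun h => hx (by simpa using hT h)
  simp only [MapsTo, mem_iUnion]
  rintro x ⟨i, hx⟩
  have hxT := notMem_range_of_mem_openPiece ht hx
  obtain ⟨j, hj⟩ : ∃ j, s j = σ (s i) :=
    (hS (Or.inr ⟨i, rfl⟩)).resolve_left (hσ_notMem (notMem_range_of_mem_openPiece ht (hmem i)))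
  refine ⟨j, (mem_openPiece_iff_forall_eq ht (hmem j) (hσ_notMem hxT)).2 fun f hf => ?_⟩
  rw [hj]
  exact (mem_openPiece_iff_forall_eq ht (hmem i) hxT).1 hx (f ∘ σ) (h𝒜 f hf)

end Intervals

theorem statement6_general (N : ℕ) (t : Fin N → ℝ) (ht : StrictMono t)
    (m : ℕ) (s : Fin m → ℝ)
    (α : Fin m → ℕ) (hmem : ∀ i, s i ∈ openPiece N t (α i))
    (σ : Equiv.Perm ℝ)
    (h1 : AlgInvariant (pcAlgOn (Set.range t)) σ)
    (h2 : AlgInvariant (pcAlgOn (Set.range t)) σ.symm)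
    (h3 : AlgInvariant (pcAlgOn (Set.range t ∪ Set.range s)) σ)
    (h4 : AlgInvariant (pcAlgOn (Set.range t ∪ Set.range s)) σ.symm) :
    σ '' (⋃ i, openPiece N t (α i)) = ⋃ i, openPiece N t (α i) :=
  (σ.bijOn' (mapsTo_iUnion_openPiece ht hmem h1 h4)
    (mapsTo_iUnion_openPiece ht hmem h2 h3)).image_eq

/-- if the added jump points `s i` lie in the open intervals `I_{α i}` and both
`𝒜` and `𝒜_S` are invariant under the bijection `σ` and its inverse, then
`σ(⋃ᵢ I_{α i}) = ⋃ᵢ I_{α i}`. -/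
theorem statement6 (N : ℕ) (t : Fin N → ℝ) (ht : StrictMono t)
    (m : ℕ) (s : Fin m → ℝ) (hs : Function.Injective s)
    (α : Fin m → ℕ) (hα : ∀ i, α i ≤ N) (hmem : ∀ i, s i ∈ openPiece N t (α i))
    (σ : Equiv.Perm ℝ)
    (h1 : AlgInvariant (pcAlgOn (Set.range t)) σ)
    (h2 : AlgInvariant (pcAlgOn (Set.range t)) σ.symm)
    (h3 : AlgInvariant (pcAlgOn (Set.range t ∪ Set.range s)) σ)
    (h4 : AlgInvariant (pcAlgOn (Set.range t ∪ Set.range s)) σ.symm) :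
    σ '' (⋃ i, openPiece N t (α i)) = ⋃ i, openPiece N t (α i) :=
  statement6_general N t ht m s α hmem σ h1 h2 h3 h4

end PaperTRS
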